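/- Let M = ℂ[t,t^{-1}]/⟨1⟩ (spanned by u_j, j ∈ ℤ, with u_0 = 0) be the W_1-module with action e_k u_s = s u_{s+k}. Then its A-cover M̂ (the span of all ψ(e_k, u_s) ∈ Hom(A,M), where ψ(e_k,u_s)(t^m) = e_{k+m} u_s) has basis {θ_j : j ∈ ℤ} where θ_j(t^m) = u_{m+j}, satisfying ψ(e_k, u_s) = s θ_{k+s}; moreover the AW_1-module structure on M̂ is given by e_p θ_j = j θ_{j+p} and t^p θ_j = θ_{j+p}. In particular θ_0 ≠ 0, so the A-cover fills in the missing zero weight space of M. -/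

import Mathlib

/-!
Evaluating on monomials identifies `Hom(A, M)` with functions `ℤ → M`. Since
`e_{k+m} u_s = s u_{s+k+m}`, the element `ψ(e_k, u_s)` is `s θ_{k+s}`, so the cover is spanned by
the `θ_j` (each `θ_j = ψ(e_{j-1}, u_1)`). The `θ_j` are independent because `θ_i(t^{1-j})` has
`u_1`-coefficient `δ_{ij}`, and `u_1 ≠ 0` in `M`; in particular no `θ_j` vanishes, `θ_0` included.
The module structure is a direct computation on monomials.
-/

noncomputable section

def Mbar : Type := (ℤ →₀ ℂ) ⧸ Submodule.span ℂ {Finsupp.single (0 : ℤ) (1 : ℂ)}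

instance : AddCommGroup Mbar := inferInstanceAs
  (AddCommGroup ((ℤ →₀ ℂ) ⧸ Submodule.span ℂ {Finsupp.single (0 : ℤ) (1 : ℂ)}))
instance : Module ℂ Mbar := inferInstanceAs
  (Module ℂ ((ℤ →₀ ℂ) ⧸ Submodule.span ℂ {Finsupp.single (0 : ℤ) (1 : ℂ)}))

def uvec (j : ℤ) : Mbar :=
  Submodule.Quotient.mk (Finsupp.single j (1 : ℂ))

def Emap (p : ℤ) : (ℤ →₀ ℂ) →ₗ[ℂ] (ℤ →₀ ℂ) :=
  Finsupp.lsum ℂ fun s => ((s : ℂ)) • Finsupp.lsingle (s + p)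

def EM (p : ℤ) : Mbar →ₗ[ℂ] Mbar :=
  Submodule.mapQ _ _ (Emap p) (by
    rw [Submodule.span_le]
    rintro x rfl
    have h : Emap p (Finsupp.single (0 : ℤ) (1 : ℂ)) = 0 := by
      rw [Emap, Finsupp.lsum_single]
      simp
    simp only [Set.mem_setOf_eq, SetLike.mem_coe, Submodule.mem_comap, h]
    exact Submodule.zero_mem _)

def theta (j : ℤ) : ℤ → Mbar := fun m => uvec (m + j)

def psiW (k s : ℤ) : ℤ → Mbar := fun m => EM (k + m) (uvec s)

lemma EM_uvec (p s : ℤ) : EM p (uvec s) = (s : ℂ) • uvec (s + p) := by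
  have hE : Emap p (Finsupp.single s 1) = (s : ℂ) • Finsupp.single (s + p) 1 := by
    simp [Emap, Finsupp.lsum_single]
  exact (Submodule.mapQ_apply _ _ _ _).trans (congrArg Submodule.Quotient.mk hE)

/-- The coefficient of `u_n` is well defined on `M` only for `n ≠ 0`. -/
def coeffM (n : ℤ) (hn : n ≠ 0) : Mbar →ₗ[ℂ] ℂ :=
  Submodule.liftQ _ (Finsupp.lapply n) (by
    rw [Submodule.span_le]
    rintro x rfl
    simpa using Finsupp.single_eq_of_ne hn)

lemma coeffM_uvec (n : ℤ) (hn : n ≠ 0) (k : ℤ) :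
    coeffM n hn (uvec k) = Finsupp.single k (1 : ℂ) n :=
  Submodule.liftQ_apply _ _ _

lemma uvec_ne_zero {j : ℤ} (hj : j ≠ 0) : uvec j ≠ 0 := fun h => by
  simpa [h] using coeffM_uvec j hj j

lemma psiW_eq_smul_theta (k s : ℤ) : psiW k s = (s : ℂ) • theta (k + s) := by
  funext m
  simp only [psiW, theta, EM_uvec, Pi.smul_apply]
  ring_nf

lemma linearIndependent_theta : LinearIndependent ℂ theta := by
  let coeffOne : (ℤ → Mbar) →ₗ[ℂ] (ℤ → ℂ) :=
    LinearMap.pi fun j => coeffM 1 one_ne_zero ∘ₗ LinearMap.proj (1 - j)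
  have hcoeff : coeffOne ∘ theta = fun i => Pi.single i 1 := by
    funext i j
    simp only [coeffOne, Function.comp_apply, LinearMap.pi_apply, LinearMap.comp_apply,
      LinearMap.proj_apply, theta, coeffM_uvec, Finsupp.single_apply, Pi.single_apply]
    exact if_congr (by omega) rfl rfl
  exact LinearIndependent.of_comp coeffOne (hcoeff ▸ Pi.linearIndependent_single_one ℤ ℂ)

lemma span_range_theta :
    Submodule.span ℂ (Set.range theta)
      = Submodule.span ℂ {φ : ℤ → Mbar | ∃ k s : ℤ, φ = psiW k s} := by
  apply le_antisymm <;> rw [Submodule.span_le]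
  · rintro _ ⟨j, rfl⟩
    have hj : theta j = psiW (j - 1) 1 := by simp [psiW_eq_smul_theta]
    exact Submodule.subset_span ⟨j - 1, 1, hj⟩
  · rintro φ ⟨k, s, rfl⟩
    rw [psiW_eq_smul_theta]
    exact Submodule.smul_mem _ _ (Submodule.subset_span ⟨k + s, rfl⟩)

lemma coinduced_EM_theta (p j : ℤ) :
    (fun m : ℤ => EM p (theta j m) - (m : ℂ) • theta j (m + p)) = (j : ℂ) • theta (j + p) := by
  funext m
  simp only [theta, EM_uvec, Pi.smul_apply]
  rw [show m + j + p = m + (j + p) by ring, show m + p + j = m + (j + p) by ring, ← sub_smul]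
  push_cast
  ring_nf

lemma theta_shift (p j : ℤ) : (fun m : ℤ => theta j (m + p)) = theta (j + p) := by
  funext m
  simp only [theta]
  ring_nf

lemma theta_ne_zero (j : ℤ) : theta j ≠ 0 := fun h => by
  have h1 : uvec 1 = 0 := by simpa [theta] using congrFun h (1 - j)
  exact uvec_ne_zero one_ne_zero h1

/-- The `A`-cover of `M = ℂ[t,t⁻¹]/⟨1⟩` has basis `{θ_j}`, with
`ψ(e_k, u_s) = s θ_{k+s}`; the `AW_1`-module structure on the cover is
`e_p θ_j = j θ_{j+p}` (the coinduced action `(e_p φ)(t^m) = e_p(φ(t^m)) - m φ(t^{m+p})`)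
and `t^p θ_j = θ_{j+p}` (the coinduced action `(t^p φ)(t^m) = φ(t^{m+p})`).
In particular `θ_0 ≠ 0`: the cover fills in the missing zero weight space of `M`. -/
theorem cover_of_functions_mod_constants :
    (∀ k s : ℤ, psiW k s = (s : ℂ) • theta (k + s)) ∧
      LinearIndependent ℂ theta ∧
      Submodule.span ℂ (Set.range theta)
        = Submodule.span ℂ {φ : ℤ → Mbar | ∃ k s : ℤ, φ = psiW k s} ∧
      (∀ p j : ℤ, (fun m : ℤ => EM p (theta j m) - (m : ℂ) • theta j (m + p))
        = (j : ℂ) • theta (j + p)) ∧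
      (∀ p j : ℤ, (fun m : ℤ => theta j (m + p)) = theta (j + p)) ∧
      theta 0 ≠ 0 :=
  ⟨psiW_eq_smul_theta, linearIndependent_theta, span_range_theta, coinduced_EM_theta,
    theta_shift, theta_ne_zero 0⟩

end
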